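/- The real ω-Lie algebras B₁ and B₋₁, given on a basis {x,y,z} of a 3-dimensional real vector space by [x,y] = y, [x,z] = y+z, [y,z] = x, ω(x,y) = ω(x,z) = 0, ω(y,z) = 2 for B₁, and by [x,y] = y, [x,z] = y+z, [y,z] = −x, ω(x,y) = ω(x,z) = 0, ω(y,z) = −2 for B₋₁, are NOT isomorphic as real ω-Lie algebras. -/

import Mathlib

/-!
In both algebras `ω(u, v) = 2 x*([u, v])`, where `x*` is the first coordinate, and every basis
vector is a bracket; so an isomorphism `f` preserves `x*`. Writing `a = f x`, `b = f y`,
`c = f z`, the relations `[a, b] = b` and `[a, c] = b + c` in `B₋₁` then force `b₂ = 0` and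
`c₂ = b₁`, after which `[b, c] = a` reads `-b₁² = 1`.
-/

/-- The bracket of the real `B₁` on `ℝ³`: the bilinear extension of `[x,y] = y`,
`[x,z] = y + z`, `[y,z] = x` on the standard basis `x = e₀, y = e₁, z = e₂`. -/
def brB1 (u v : Fin 3 → ℝ) : Fin 3 → ℝ :=
  ![u 1 * v 2 - u 2 * v 1, (u 0 * v 1 - u 1 * v 0) + (u 0 * v 2 - u 2 * v 0),
    u 0 * v 2 - u 2 * v 0]

/-- The form of the real `B₁`: the bilinear extension of `ω(x,y) = ω(x,z) = 0`,
`ω(y,z) = 2`. -/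
def omB1 (u v : Fin 3 → ℝ) : ℝ := 2 * (u 1 * v 2 - u 2 * v 1)

/-- The bracket of the real `B₋₁` on `ℝ³`: the bilinear extension of `[x,y] = y`,
`[x,z] = y + z`, `[y,z] = -x`. -/
def brBm1 (u v : Fin 3 → ℝ) : Fin 3 → ℝ :=
  ![-(u 1 * v 2 - u 2 * v 1), (u 0 * v 1 - u 1 * v 0) + (u 0 * v 2 - u 2 * v 0),
    u 0 * v 2 - u 2 * v 0]

/-- The form of the real `B₋₁`: the bilinear extension of `ω(x,y) = ω(x,z) = 0`,
`ω(y,z) = -2`. -/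
def omBm1 (u v : Fin 3 → ℝ) : ℝ := -2 * (u 1 * v 2 - u 2 * v 1)

lemma omB1_eq_two_mul_brB1_zero (u v : Fin 3 → ℝ) : omB1 u v = 2 * brB1 u v 0 := by
  simp [omB1, brB1]

lemma omBm1_eq_two_mul_brBm1_zero (u v : Fin 3 → ℝ) : omBm1 u v = 2 * brBm1 u v 0 := by
  simp [omBm1, brBm1]; ring

lemma brB1_e0_e1 : brB1 ![1, 0, 0] ![0, 1, 0] = ![0, 1, 0] := by
  ext i; fin_cases i <;> simp [brB1]

lemma brB1_e0_e2 : brB1 ![1, 0, 0] ![0, 0, 1] = ![0, 1, 0] + ![0, 0, 1] := by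
  ext i; fin_cases i <;> simp [brB1]

lemma brB1_e1_e2 : brB1 ![0, 1, 0] ![0, 0, 1] = ![1, 0, 0] := by
  ext i; fin_cases i <;> simp [brB1]

lemma apply_brB1_zero {f : (Fin 3 → ℝ) → Fin 3 → ℝ}
    (hbr : ∀ a b, f (brB1 a b) = brBm1 (f a) (f b)) (hom : ∀ a b, omBm1 (f a) (f b) = omB1 a b)
    (u v : Fin 3 → ℝ) : f (brB1 u v) 0 = brB1 u v 0 := by
  have h := hom u v
  rw [omB1_eq_two_mul_brB1_zero, omBm1_eq_two_mul_brBm1_zero] at h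
  rw [hbr]
  linarith

lemma false_of_brBm1_relations {a b c : Fin 3 → ℝ} (hab : brBm1 a b = b)
    (hac : brBm1 a c = b + c) (hbc : brBm1 b c = a) (ha : a 0 = 1) (hb : b 0 = 0)
    (hc : c 0 = 0) : False := by
  have hab₁ := congrFun hab 1
  have hac₁ := congrFun hac 1
  have hbc₀ := congrFun hbc 0
  simp only [brBm1, Matrix.cons_val, Pi.add_apply, ha, hb, hc] at hab₁ hac₁ hbc₀
  have hb₂ : b 2 = 0 := by linarith
  have hc₂ : c 2 = b 1 := by linarith
  rw [hb₂, hc₂] at hbc₀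
  nlinarith [sq_nonneg (b 1)]

/-- The real ω-Lie algebras `B₁` and `B₋₁` are NOT isomorphic: there is no real linear
bijection intertwining the brackets and the bilinear forms. -/
theorem B1_not_iso_Bm1_real :
    ¬ ∃ f : (Fin 3 → ℝ) ≃ₗ[ℝ] (Fin 3 → ℝ),
      (∀ a b : Fin 3 → ℝ, f (brB1 a b) = brBm1 (f a) (f b)) ∧
      (∀ a b : Fin 3 → ℝ, omBm1 (f a) (f b) = omB1 a b) := by
  rintro ⟨f, hbr, hom⟩
  have hx := apply_brB1_zero hbr hom ![0, 1, 0] ![0, 0, 1]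
  have hy := apply_brB1_zero hbr hom ![1, 0, 0] ![0, 1, 0]
  have hz := apply_brB1_zero hbr hom ![1, 0, 0] ![0, 0, 1]
  rw [brB1_e1_e2] at hx
  rw [brB1_e0_e1] at hy
  rw [brB1_e0_e2, map_add, Pi.add_apply, Pi.add_apply, hy] at hz
  refine false_of_brBm1_relations (a := f ![1, 0, 0]) (b := f ![0, 1, 0]) (c := f ![0, 0, 1])
    ?_ ?_ ?_ (by simpa using hx) (by simpa using hy) (by simpa using hz)
  · rw [← hbr, brB1_e0_e1]
  · rw [← hbr, brB1_e0_e2, map_add]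
  · rw [← hbr, brB1_e1_e2]
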